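/- Let Γ be a δ-hyperbolic group with word metric d_w acting on its Gromov boundary ∂Γ. Let x ≠ y in ∂Γ and let (γ_i) be a sequence in Γ tending to infinity such that (γ_i·x, γ_i·y) → (x', y') in ∂Γ × ∂Γ. Then, after passing to a subsequence if necessary, the sequence γ_i (viewed as points of Γ) converges in Γ ∪ ∂Γ to either x' or y'. -/

import Mathlib

/-!
If `x ≠ y`, the Gromov products `(ρx n | ρy n)` stay bounded by some `K`: otherwise, by
δ-hyperbolicity, the two rays would fellow-travel. For `p = γ i` the identity
`(p | p a) + (p | p b) = |p| + (p a | p b) - (a | b)` then forces `(p | p ρx n)` or `(p | p ρy n)`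
to be at least `(|p| - K) / 2`, and since `p ρx n` is close to `ρx' n` (resp. `p ρy n` to `ρy' n`),
`p` is close to `x'` or to `y'`. So the larger of the Gromov products of `γ i` with `x'` and `y'`
tends to infinity, and a subsequence on which the same one of them is the larger does the job.
-/

open Filter

variable {Γ : Type*} [Group Γ]

/-- Word length with respect to a generating set S. -/
noncomputable def wordLength (S : Set Γ) (γ : Γ) : ℕ :=
  sInf {n | ∃ l : List Γ, (∀ s ∈ l, s ∈ S) ∧ l.length = n ∧ l.prod = γ}

/-- The left-invariant word metric. -/
noncomputable def wdist (S : Set Γ) (a b : Γ) : ℕ := wordLength S (a⁻¹ * b)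

/-- A discrete geodesic ray in (Γ, d_w). -/
def IsGeodesicRay (S : Set Γ) (ρ : ℕ → Γ) : Prop :=
  ∀ m n : ℕ, wdist S (ρ m) (ρ n) = max m n - min m n

/-- Two rays define the same boundary point iff they stay at bounded distance. -/
def RayEquiv (S : Set Γ) (ρ σ : ℕ → Γ) : Prop :=
  ∃ C : ℕ, ∀ n, wdist S (ρ n) (σ n) ≤ C

/-- Gromov product based at the identity, with respect to the word metric. -/
noncomputable def gp (S : Set Γ) (a b : Γ) : ℝ :=
  ((wdist S 1 a : ℝ) + (wdist S 1 b : ℝ) - (wdist S a b : ℝ)) / 2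

/-- Gromov product of a group element with a boundary point represented by a ray. -/
noncomputable def elemRayGP (S : Set Γ) (a : Γ) (σ : ℕ → Γ) : EReal :=
  liminf (fun n => ((gp S a (σ n) : ℝ) : EReal)) atTop

/-- A sequence of group elements converges to the boundary point represented by the
ray σ iff the Gromov products with σ tend to infinity. -/
def ConvToBoundary (S : Set Γ) (u : ℕ → Γ) (σ : ℕ → Γ) : Prop :=
  Tendsto (fun i => elemRayGP S (u i) σ) atTop (nhds ⊤)

/-- Gromov product of two boundary points represented by rays. -/
noncomputable def rayGP (S : Set Γ) (ρ σ : ℕ → Γ) : EReal :=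
  liminf (fun n => ((gp S (ρ n) (σ n) : ℝ) : EReal)) atTop

/-- A sequence of boundary points (given by rays) converges to the boundary point σ. -/
def RaySeqConv (S : Set Γ) (x : ℕ → (ℕ → Γ)) (σ : ℕ → Γ) : Prop :=
  Tendsto (fun i => rayGP S (x i) σ) atTop (nhds ⊤)

/-- δ-hyperbolicity as Gromov's four-point condition, based at the identity. -/
def GromovHyperbolic (S : Set Γ) (δ : ℝ) : Prop :=
  ∀ a b c : Γ, min (gp S a c) (gp S c b) - δ ≤ gp S a b

section WordMetric

variable {S : Set Γ}

theorem wordLength_le_length {γ : Γ} (l : List Γ) (hl : ∀ s ∈ l, s ∈ S) (hprod : l.prod = γ) :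
    wordLength S γ ≤ l.length :=
  Nat.sInf_le ⟨l, hl, rfl, hprod⟩

theorem exists_list_length_eq_wordLength
    (hgen : ∀ γ : Γ, ∃ l : List Γ, (∀ s ∈ l, s ∈ S) ∧ l.prod = γ) (γ : Γ) :
    ∃ l : List Γ, (∀ s ∈ l, s ∈ S) ∧ l.length = wordLength S γ ∧ l.prod = γ := by
  obtain ⟨l, hl, hprod⟩ := hgen γ
  exact Nat.sInf_mem (s := {n | ∃ l : List Γ, (∀ s ∈ l, s ∈ S) ∧ l.length = n ∧ l.prod = γ})
    ⟨l.length, l, hl, rfl, hprod⟩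

theorem wordLength_one : wordLength S (1 : Γ) = 0 :=
  Nat.le_zero.mp (wordLength_le_length [] (by simp) (by simp))

theorem wordLength_mul_le (hgen : ∀ γ : Γ, ∃ l : List Γ, (∀ s ∈ l, s ∈ S) ∧ l.prod = γ)
    (g h : Γ) : wordLength S (g * h) ≤ wordLength S g + wordLength S h := by
  obtain ⟨l₁, hl₁, hlen₁, rfl⟩ := exists_list_length_eq_wordLength hgen g
  obtain ⟨l₂, hl₂, hlen₂, rfl⟩ := exists_list_length_eq_wordLength hgen h
  rw [← hlen₁, ← hlen₂, ← List.length_append, ← List.prod_append]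
  exact wordLength_le_length _ (fun s hs => (List.mem_append.mp hs).elim (hl₁ s) (hl₂ s)) rfl

theorem wordLength_inv_le (hsymm : ∀ s ∈ S, s⁻¹ ∈ S)
    (hgen : ∀ γ : Γ, ∃ l : List Γ, (∀ s ∈ l, s ∈ S) ∧ l.prod = γ) (γ : Γ) :
    wordLength S γ⁻¹ ≤ wordLength S γ := by
  obtain ⟨l, hl, hlen, rfl⟩ := exists_list_length_eq_wordLength hgen γ
  rw [← hlen, List.prod_inv_reverse, ← List.length_map (f := fun x : Γ => x⁻¹), ← List.length_reverse]
  refine wordLength_le_length _ (fun s hs => ?_) rfl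
  obtain ⟨x, hx, rfl⟩ := List.mem_map.mp (List.mem_reverse.mp hs)
  exact hsymm x (hl x hx)

theorem wordLength_inv (hsymm : ∀ s ∈ S, s⁻¹ ∈ S)
    (hgen : ∀ γ : Γ, ∃ l : List Γ, (∀ s ∈ l, s ∈ S) ∧ l.prod = γ) (γ : Γ) :
    wordLength S γ⁻¹ = wordLength S γ :=
  (wordLength_inv_le hsymm hgen γ).antisymm (by simpa using wordLength_inv_le hsymm hgen γ⁻¹)

theorem wdist_one_left (a : Γ) : wdist S 1 a = wordLength S a := by
  simp [wdist]

theorem wdist_mul_left (g a b : Γ) : wdist S (g * a) (g * b) = wdist S a b := by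
  simp [wdist, mul_assoc]

theorem wdist_comm (hsymm : ∀ s ∈ S, s⁻¹ ∈ S)
    (hgen : ∀ γ : Γ, ∃ l : List Γ, (∀ s ∈ l, s ∈ S) ∧ l.prod = γ) (a b : Γ) :
    wdist S a b = wdist S b a := by
  rw [wdist, wdist, ← wordLength_inv hsymm hgen, mul_inv_rev, inv_inv]

theorem wdist_triangle (hgen : ∀ γ : Γ, ∃ l : List Γ, (∀ s ∈ l, s ∈ S) ∧ l.prod = γ)
    (a b c : Γ) : (wdist S a c : ℝ) ≤ wdist S a b + wdist S b c := by
  have h := wordLength_mul_le hgen (a⁻¹ * b) (b⁻¹ * c)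
  rw [show a⁻¹ * b * (b⁻¹ * c) = a⁻¹ * c by group] at h
  exact_mod_cast h

end WordMetric

section GromovProduct

variable {S : Set Γ}

theorem gp_comm (hsymm : ∀ s ∈ S, s⁻¹ ∈ S)
    (hgen : ∀ γ : Γ, ∃ l : List Γ, (∀ s ∈ l, s ∈ S) ∧ l.prod = γ) (a b : Γ) :
    gp S a b = gp S b a := by
  rw [gp, gp, wdist_comm hsymm hgen a b, add_comm (wdist S 1 a : ℝ)]

theorem gp_nonneg (hsymm : ∀ s ∈ S, s⁻¹ ∈ S)
    (hgen : ∀ γ : Γ, ∃ l : List Γ, (∀ s ∈ l, s ∈ S) ∧ l.prod = γ) (a b : Γ) :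
    0 ≤ gp S a b := by
  have h := wdist_triangle hgen a 1 b
  rw [wdist_comm hsymm hgen a 1] at h
  rw [gp]
  linarith

theorem gp_le_wordLength_left (hgen : ∀ γ : Γ, ∃ l : List Γ, (∀ s ∈ l, s ∈ S) ∧ l.prod = γ)
    (a b : Γ) : gp S a b ≤ wordLength S a := by
  have h := wdist_triangle hgen 1 a b
  rw [gp, ← wdist_one_left]
  linarith

/-- `gp S a b` is the Gromov product of `p * a` and `p * b` based at `p`. -/
theorem gp_mul_add_gp_mul (p a b : Γ) :
    gp S p (p * a) + gp S p (p * b) = wordLength S p + gp S (p * a) (p * b) - gp S a b := by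
  have hp : ∀ c : Γ, wdist S p (p * c) = wdist S 1 c := fun c => by
    simpa using wdist_mul_left (S := S) p 1 c
  simp only [gp, hp, wdist_mul_left, wdist_one_left]
  ring

theorem le_gp_mul_or_le_gp_mul (hsymm : ∀ s ∈ S, s⁻¹ ∈ S)
    (hgen : ∀ γ : Γ, ∃ l : List Γ, (∀ s ∈ l, s ∈ S) ∧ l.prod = γ) {a b p : Γ} {K T : ℝ}
    (hK : gp S a b ≤ K) (hp : 2 * T + K ≤ wordLength S p) :
    T ≤ gp S p (p * a) ∨ T ≤ gp S p (p * b) := by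
  have hsum := gp_mul_add_gp_mul (S := S) p a b
  have hpos := gp_nonneg hsymm hgen (p * a) (p * b)
  by_contra! h
  linarith [h.1, h.2]

theorem GromovHyperbolic.nonneg {δ : ℝ} (hhyp : GromovHyperbolic S δ) : 0 ≤ δ := by
  simpa [gp, wdist_one_left, wordLength_one] using hhyp 1 1 1

theorem le_gp_of_le_of_le {δ : ℝ} (hhyp : GromovHyperbolic S δ) {a b c : Γ} {T : ℝ}
    (hac : T ≤ gp S a c) (hcb : T ≤ gp S c b) : T - δ ≤ gp S a b :=
  (sub_le_sub_right (le_min hac hcb) δ).trans (hhyp a b c)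

end GromovProduct

section GeodesicRay

variable {S : Set Γ} {ρ : ℕ → Γ}

theorem wordLength_ray_le (hgen : ∀ γ : Γ, ∃ l : List Γ, (∀ s ∈ l, s ∈ S) ∧ l.prod = γ)
    (hρ : IsGeodesicRay S ρ) (n : ℕ) :
    (wordLength S (ρ n) : ℝ) ≤ n + wordLength S (ρ 0) := by
  have h := wdist_triangle hgen 1 (ρ 0) (ρ n)
  rw [hρ 0 n] at h
  simpa [wdist_one_left, add_comm] using h

theorem le_gp_ray (hsymm : ∀ s ∈ S, s⁻¹ ∈ S)
    (hgen : ∀ γ : Γ, ∃ l : List Γ, (∀ s ∈ l, s ∈ S) ∧ l.prod = γ)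
    (hρ : IsGeodesicRay S ρ) {m n : ℕ} (hmn : m ≤ n) :
    m - (wordLength S (ρ 0) : ℝ) ≤ gp S (ρ m) (ρ n) := by
  have hmn' : (wdist S (ρ m) (ρ n) : ℝ) = n - m := by
    rw [hρ m n, max_eq_right hmn, min_eq_left hmn, Nat.cast_sub hmn]
  have hm := wdist_triangle hgen (ρ 0) 1 (ρ m)
  have hn := wdist_triangle hgen (ρ 0) 1 (ρ n)
  rw [hρ 0 m, wdist_comm hsymm hgen (ρ 0) 1] at hm
  rw [hρ 0 n, wdist_comm hsymm hgen (ρ 0) 1] at hn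
  simp only [Nat.zero_le, max_eq_right, min_eq_left, Nat.sub_zero, wdist_one_left] at hm hn
  rw [gp, hmn', wdist_one_left, wdist_one_left]
  linarith

theorem le_elemRayGP {δ : ℝ} (hsymm : ∀ s ∈ S, s⁻¹ ∈ S)
    (hgen : ∀ γ : Γ, ∃ l : List Γ, (∀ s ∈ l, s ∈ S) ∧ l.prod = γ) (hhyp : GromovHyperbolic S δ)
    {σ : ℕ → Γ} (hσ : IsGeodesicRay S σ) {g : Γ} {n : ℕ} {T : ℝ}
    (hg : T ≤ gp S g (σ n)) (hn : T + wordLength S (σ 0) ≤ n) :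
    ((T - δ : ℝ) : EReal) ≤ elemRayGP S g σ := by
  refine le_liminf_of_le (by isBoundedDefault) ?_
  filter_upwards [eventually_ge_atTop n] with m hm
  exact EReal.coe_le_coe_iff.mpr
    (le_gp_of_le_of_le hhyp hg (by linarith [le_gp_ray hsymm hgen hσ hm]))

end GeodesicRay

section Hyperbolic

variable {S : Set Γ} {δ : ℝ}

theorem wdist_ray_le_of_le_gp (hsymm : ∀ s ∈ S, s⁻¹ ∈ S)
    (hgen : ∀ γ : Γ, ∃ l : List Γ, (∀ s ∈ l, s ∈ S) ∧ l.prod = γ) (hhyp : GromovHyperbolic S δ)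
    {ρx ρy : ℕ → Γ} (hρx : IsGeodesicRay S ρx) (hρy : IsGeodesicRay S ρy) {m n : ℕ}
    (h : m + ((wordLength S (ρx 0) : ℝ) + wordLength S (ρy 0)) ≤ gp S (ρx n) (ρy n)) :
    (wdist S (ρx m) (ρy m) : ℝ) ≤
      3 * ((wordLength S (ρx 0) : ℝ) + wordLength S (ρy 0)) + 4 * δ := by
  set C : ℝ := (wordLength S (ρx 0) : ℝ) + wordLength S (ρy 0)
  have hx₀ : (0 : ℝ) ≤ wordLength S (ρx 0) := Nat.cast_nonneg _
  have hy₀ : (0 : ℝ) ≤ wordLength S (ρy 0) := Nat.cast_nonneg _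
  have hδ := hhyp.nonneg
  have hmn : m ≤ n := by
    have := gp_le_wordLength_left hgen (ρx n) (ρy n)
    have := wordLength_ray_le hgen hρx n
    exact_mod_cast (show (m : ℝ) ≤ n by linarith)
  have hx := le_gp_ray hsymm hgen hρx hmn
  have hy := le_gp_ray hsymm hgen hρy hmn
  rw [gp_comm hsymm hgen] at hy
  have h₁ : m - C - δ ≤ gp S (ρx n) (ρy m) := le_gp_of_le_of_le hhyp (by linarith) (by linarith)
  have h₂ : m - C - δ - δ ≤ gp S (ρx m) (ρy m) := le_gp_of_le_of_le hhyp (by linarith) h₁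
  have := wordLength_ray_le hgen hρx m
  have := wordLength_ray_le hgen hρy m
  rw [gp, wdist_one_left, wdist_one_left] at h₂
  linarith

theorem bddAbove_gp_of_not_rayEquiv (hsymm : ∀ s ∈ S, s⁻¹ ∈ S)
    (hgen : ∀ γ : Γ, ∃ l : List Γ, (∀ s ∈ l, s ∈ S) ∧ l.prod = γ) (hhyp : GromovHyperbolic S δ)
    {ρx ρy : ℕ → Γ} (hρx : IsGeodesicRay S ρx) (hρy : IsGeodesicRay S ρy)
    (hxy : ¬ RayEquiv S ρx ρy) : BddAbove (Set.range fun n => gp S (ρx n) (ρy n)) := by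
  contrapose! hxy
  refine ⟨⌈3 * ((wordLength S (ρx 0) : ℝ) + wordLength S (ρy 0)) + 4 * δ⌉₊, fun m => ?_⟩
  obtain ⟨_, ⟨n, rfl⟩, hn⟩ :=
    not_bddAbove_iff.mp hxy (m + ((wordLength S (ρx 0) : ℝ) + wordLength S (ρy 0)))
  exact_mod_cast (wdist_ray_le_of_le_gp hsymm hgen hhyp hρx hρy hn.le).trans (Nat.le_ceil _)

theorem le_max_elemRayGP (hsymm : ∀ s ∈ S, s⁻¹ ∈ S)
    (hgen : ∀ γ : Γ, ∃ l : List Γ, (∀ s ∈ l, s ∈ S) ∧ l.prod = γ) (hhyp : GromovHyperbolic S δ)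
    {ρx ρy ρx' ρy' : ℕ → Γ} (hρx' : IsGeodesicRay S ρx') (hρy' : IsGeodesicRay S ρy') {K : ℝ}
    (hK : ∀ n, gp S (ρx n) (ρy n) ≤ K) {p : Γ} {T : ℝ} (hp : 2 * T + K ≤ wordLength S p)
    (hx : (T : EReal) < rayGP S (fun n => p * ρx n) ρx')
    (hy : (T : EReal) < rayGP S (fun n => p * ρy n) ρy') :
    ((T - 2 * δ : ℝ) : EReal) ≤ max (elemRayGP S p ρx') (elemRayGP S p ρy') := by
  have hδ := hhyp.nonneg
  obtain ⟨n, hxn, hyn, hn⟩ := ((eventually_lt_of_lt_liminf hx).and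
    ((eventually_lt_of_lt_liminf hy).and (eventually_ge_atTop
      ⌈T + wordLength S (ρx' 0) + wordLength S (ρy' 0)⌉₊))).exists
  rw [EReal.coe_lt_coe_iff] at hxn hyn
  have hn' := Nat.ceil_le.mp hn
  have hx₀ : (0 : ℝ) ≤ wordLength S (ρx' 0) := Nat.cast_nonneg _
  have hy₀ : (0 : ℝ) ≤ wordLength S (ρy' 0) := Nat.cast_nonneg _
  rw [show T - 2 * δ = T - δ - δ by ring]
  rcases le_gp_mul_or_le_gp_mul hsymm hgen (hK n) hp with h | h
  · exact le_max_of_le_left <|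
      le_elemRayGP hsymm hgen hhyp hρx' (le_gp_of_le_of_le hhyp h hxn.le) (by linarith)
  · exact le_max_of_le_right <|
      le_elemRayGP hsymm hgen hhyp hρy' (le_gp_of_le_of_le hhyp h hyn.le) (by linarith)

end Hyperbolic

theorem exists_strictMono_tendsto_or_of_tendsto_max {α : Type*} [LinearOrder α]
    {a b : ℕ → α} {l : Filter α} (h : Tendsto (fun i => max (a i) (b i)) atTop l) :
    ∃ φ : ℕ → ℕ, StrictMono φ ∧ (Tendsto (a ∘ φ) atTop l ∨ Tendsto (b ∘ φ) atTop l) := by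
  by_cases hinf : {i | b i ≤ a i}.Infinite
  · refine ⟨Nat.nth fun i => b i ≤ a i, Nat.nth_strictMono hinf, Or.inl ?_⟩
    refine (h.comp (Nat.nth_strictMono hinf).tendsto_atTop).congr fun i => ?_
    exact max_eq_left (Nat.nth_mem_of_infinite hinf i)
  · have hlt : ∀ᶠ i in atTop, a i < b i := by
      rw [← Nat.cofinite_eq_atTop]
      filter_upwards [(Set.not_infinite.mp hinf).eventually_cofinite_notMem] with i hi
      exact lt_of_not_ge hi
    exact ⟨id, strictMono_id, Or.inr (h.congr' (hlt.mono fun i hi => max_eq_right hi.le))⟩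

theorem stmt9_general (S : Set Γ) (hsymm : ∀ s ∈ S, s⁻¹ ∈ S)
    (hgen : ∀ γ : Γ, ∃ l : List Γ, (∀ s ∈ l, s ∈ S) ∧ l.prod = γ)
    (δ : ℝ)
    (hhyp : ∀ a b c : Γ, min (gp S a c) (gp S c b) - δ ≤ gp S a b)
    (ρx ρy : ℕ → Γ) (hρx : IsGeodesicRay S ρx) (hρy : IsGeodesicRay S ρy)
    (hxy : ¬ RayEquiv S ρx ρy)
    (ρx' ρy' : ℕ → Γ) (hρx' : IsGeodesicRay S ρx') (hρy' : IsGeodesicRay S ρy')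
    (γ : ℕ → Γ) (hγ : Tendsto (fun i => wordLength S (γ i)) atTop atTop)
    (hx : RaySeqConv S (fun i => fun n => γ i * ρx n) ρx')
    (hy : RaySeqConv S (fun i => fun n => γ i * ρy n) ρy') :
    ∃ φ : ℕ → ℕ, StrictMono φ ∧
      (ConvToBoundary S (fun i => γ (φ i)) ρx' ∨
       ConvToBoundary S (fun i => γ (φ i)) ρy') := by
  obtain ⟨K, hK⟩ := bddAbove_gp_of_not_rayEquiv hsymm hgen hhyp hρx hρy hxy
  refine exists_strictMono_tendsto_or_of_tendsto_max (a := fun i => elemRayGP S (γ i) ρx')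
    (b := fun i => elemRayGP S (γ i) ρy') (EReal.tendsto_nhds_top_iff_real.mpr fun M => ?_)
  set T := M + 1 + 2 * δ
  filter_upwards [hγ.eventually_ge_atTop ⌈2 * T + K⌉₊,
    hx.eventually (eventually_gt_nhds (EReal.coe_lt_top T)),
    hy.eventually (eventually_gt_nhds (EReal.coe_lt_top T))] with i hi hxi hyi
  refine lt_of_lt_of_le (EReal.coe_lt_coe_iff.mpr (by linarith)) <|
    le_max_elemRayGP hsymm hgen hhyp hρx' hρy' (fun n => hK ⟨n, rfl⟩) (Nat.ceil_le.mp hi) hxi hyi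

/-- If x ≠ y in ∂Γ and γ_i → ∞ in a hyperbolic group Γ with
(γ_i·x, γ_i·y) → (x', y'), then along a subsequence the γ_i converge to x' or y'. -/
theorem stmt9 (S : Set Γ) (hfin : S.Finite) (hsymm : ∀ s ∈ S, s⁻¹ ∈ S)
    (hgen : ∀ γ : Γ, ∃ l : List Γ, (∀ s ∈ l, s ∈ S) ∧ l.prod = γ)
    (δ : ℝ) (hδ : 0 ≤ δ)
    (hhyp : ∀ a b c : Γ, min (gp S a c) (gp S c b) - δ ≤ gp S a b)
    (ρx ρy : ℕ → Γ) (hρx : IsGeodesicRay S ρx) (hρy : IsGeodesicRay S ρy)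
    (hxy : ¬ RayEquiv S ρx ρy)
    (ρx' ρy' : ℕ → Γ) (hρx' : IsGeodesicRay S ρx') (hρy' : IsGeodesicRay S ρy')
    (γ : ℕ → Γ) (hγ : Tendsto (fun i => wordLength S (γ i)) atTop atTop)
    (hx : RaySeqConv S (fun i => fun n => γ i * ρx n) ρx')
    (hy : RaySeqConv S (fun i => fun n => γ i * ρy n) ρy') :
    ∃ φ : ℕ → ℕ, StrictMono φ ∧
      (ConvToBoundary S (fun i => γ (φ i)) ρx' ∨
       ConvToBoundary S (fun i => γ (φ i)) ρy') :=
  stmt9_general S hsymm hgen δ hhyp ρx ρy hρx hρy hxy ρx' ρy' hρx' hρy' γ hγ hx hy
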